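/- For every sufficiently small constant ε > 0 and every η > 0 there exists C > 0 such that the following holds. Let d ≥ 3 and n be integers with n/d ≥ C, let p = (1−ε)/d, set k = (4/ε²)·ln(n/d), and let X₁, …, Xₙ be i.i.d. Bernoulli(p) random variables. Then with probability at least 1 − η there is no interval I of kd consecutive indices in {1,…,n} such that the first variable of I takes value 1 and at least k of the variables X_i with i ∈ I take value 1. -/

import Mathlib

open scoped Classical

/-- Probability, under the product Bernoulli(p) measure on `V → Bool`, of the event `A`:
each vertex is included (value `true`) independently with probability `p`. -/
noncomputable def percProb {V : Type*} [Fintype V] [DecidableEq V] (p : ℝ)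
    (A : Set (V → Bool)) : ℝ :=
  ∑ ω : V → Bool, if ω ∈ A then (∏ v : V, if ω v = true then p else 1 - p) else 0

/-- The random vertex subset `V_p` determined by the sample `ω`. -/
def vertexSet {V : Type*} (ω : V → Bool) : Set V := {v | ω v = true}

/-- The percolated graph `G[V_p]`: the subgraph of `G` induced on the chosen vertices. -/
def percGraph {V : Type*} (G : SimpleGraph V) (ω : V → Bool) :
    SimpleGraph (vertexSet ω) :=
  G.induce (vertexSet ω)

/-- `G` is an `(n,d,λ)`-graph: it is `d`-regular and every vector orthogonal to the
constants has Rayleigh quotient at most `lam` in absolute value, which for a `d`-regular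
graph is equivalent to `max (|λ₂|, |λₙ|) ≤ lam` for the adjacency-matrix eigenvalues
`d = λ₁ ≥ λ₂ ≥ ⋯ ≥ λₙ`. -/
def IsNDLGraph {V : Type*} [Fintype V] (G : SimpleGraph V) (d : ℕ) (lam : ℝ) : Prop :=
  (∀ v : V, Nat.card (G.neighborSet v) = d) ∧
  ∀ f : V → ℝ, (∑ v : V, f v) = 0 →
    |∑ v : V, ∑ w : V, (if G.Adj v w then f v * f w else 0)| ≤ lam * ∑ v : V, (f v) ^ 2

/-- External neighbourhood of `S` in `G`: vertices outside `S` with a neighbour in `S`. -/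
def extNbhd {V : Type*} (G : SimpleGraph V) (S : Set V) : Set V :=
  {v | v ∉ S ∧ ∃ u ∈ S, G.Adj u v}

/-!
Union bound over the `n` possible starting points `a`. For a fixed start, Markov's inequality
applied to `exp θ ^ (number of ones in the interval I)` on the event `X_a = 1`, with
`exp θ = 1/(1-ε)`, bounds its probability by
`(1-ε)^k · (p exp θ) · (1 - p + p exp θ)^(#I - 1) = (1-ε)^k · (1/d) · (1 + ε/d)^(#I - 1)`,
which is at most `exp (-(θ - ε) k) / d` as `#I - 1 ≤ kd`. Since `θ = -log (1-ε) ≥ ε + ε²/2`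
and `ε² k / 2 = 2 log (n/d)`, this is at most `(d/n)² / d`, so the `n` starts contribute
at most `d/n ≤ η` once `n/d ≥ max 2 η⁻¹`. This works for every `ε < 1`.
-/

open Finset Real

section Bernoulli

variable {V : Type*} [Fintype V] {p : ℝ}

lemma bernoulli_weight_nonneg (hp0 : 0 ≤ p) (hp1 : p ≤ 1) (ω : V → Bool) :
    0 ≤ ∏ v, if ω v = true then p else 1 - p :=
  prod_nonneg fun v _ => by split <;> linarith

variable [DecidableEq V]

lemma sum_prod_bernoulli_mul (p : ℝ) (g : V → Bool → ℝ) :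
    ∑ ω : V → Bool, ∏ v, (if ω v = true then p else 1 - p) * g v (ω v)
      = ∏ v, (p * g v true + (1 - p) * g v false) := by
  rw [← Fintype.prod_sum (κ := fun _ => Bool) fun v b => (if b = true then p else 1 - p) * g v b]
  simp

lemma percProb_compl (p : ℝ) (A : Set (V → Bool)) :
    percProb p Aᶜ = 1 - percProb p A := by
  have hsum := sum_prod_bernoulli_mul (V := V) p fun _ _ => 1
  simp only [mul_one, add_sub_cancel, prod_const_one] at hsum
  rw [eq_sub_iff_add_eq, percProb, percProb, ← sum_add_distrib]
  conv_rhs => rw [← hsum]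
  refine sum_congr rfl fun ω _ => ?_
  by_cases hω : ω ∈ A <;> simp [hω]

lemma percProb_le_sum_of_subset_biUnion {ι : Type*} (hp0 : 0 ≤ p) (hp1 : p ≤ 1)
    {A : Set (V → Bool)} {s : Finset ι} {B : ι → Set (V → Bool)}
    (hA : A ⊆ ⋃ i ∈ s, B i) : percProb p A ≤ ∑ i ∈ s, percProb p (B i) := by
  unfold percProb
  rw [sum_comm]
  refine sum_le_sum fun ω _ => ?_
  have hw := bernoulli_weight_nonneg hp0 hp1 ω
  split_ifs with hωA
  · obtain ⟨i, hi, hωi⟩ := Set.mem_iUnion₂.mp (hA hωA)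
    calc _ = if ω ∈ B i then ∏ v, (if ω v = true then p else 1 - p) else 0 := by simp [hωi]
      _ ≤ _ := single_le_sum (f := fun i => if ω ∈ B i then _ else 0)
          (fun j _ => by split <;> positivity) hi
  · exact sum_nonneg fun i _ => by split <;> positivity

/-- Markov's inequality for a nonnegative product test function. -/
lemma mul_percProb_le_prod (hp0 : 0 ≤ p) (hp1 : p ≤ 1) {A : Set (V → Bool)} {c : ℝ}
    {g : V → Bool → ℝ} (hg : ∀ v b, 0 ≤ g v b) (hc : ∀ ω ∈ A, c ≤ ∏ v, g v (ω v)) :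
    c * percProb p A ≤ ∏ v, (p * g v true + (1 - p) * g v false) := by
  rw [← sum_prod_bernoulli_mul, percProb, mul_sum]
  refine sum_le_sum fun ω _ => ?_
  have hw := bernoulli_weight_nonneg hp0 hp1 ω
  rw [prod_mul_distrib]
  split_ifs with hωA
  · rw [mul_comm c]
    exact mul_le_mul_of_nonneg_left (hc ω hωA) hw
  · rw [mul_zero]
    exact mul_nonneg hw (prod_nonneg fun v _ => hg v (ω v))

lemma percProb_mem_and_dense_le (hp0 : 0 ≤ p) (hp1 : p ≤ 1) {θ : ℝ} (hθ : 0 ≤ θ)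
    {J : Finset V} {a : V} (ha : a ∈ J) (k : ℝ) :
    percProb p {ω | ω a = true ∧ k ≤ (#(J.filter (ω · = true)) : ℝ)}
      ≤ exp (-(θ * k)) * (p * exp θ * (1 - p + p * exp θ) ^ (#J - 1)) := by
  -- Markov's inequality for `exp θ ^ (number of chosen vertices of J)`, killed unless `a` is chosen.
  set g : V → Bool → ℝ := fun v b =>
    if b = true then (if v ∈ J then exp θ else 1) else (if v = a then 0 else 1)
  have hg : ∀ v b, 0 ≤ g v b := fun v b => by simp only [g]; split_ifs <;> positivity
  have hprod : ∀ ω : V → Bool, ω a = true →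
      ∏ v, g v (ω v) = exp θ ^ #(J.filter (ω · = true)) := by
    intro ω hωa
    calc ∏ v, g v (ω v) = ∏ v, if v ∈ J.filter (ω · = true) then exp θ else 1 := by
          refine prod_congr rfl fun v _ => ?_
          cases hv : ω v
          · have hva : v ≠ a := by rintro rfl; simp [hv] at hωa
            simp [g, hv, hva]
          · simp [g, hv]
      _ = _ := by rw [prod_ite_mem, univ_inter, prod_const]
  have hmarkov := mul_percProb_le_prod (A := {ω | ω a = true ∧ k ≤ (#(J.filter (ω · = true)) : ℝ)})
    (c := exp (θ * k)) hp0 hp1 hg fun ω ⟨hωa, hk⟩ => by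
      rw [hprod ω hωa, ← exp_nat_mul, exp_le_exp, mul_comm]
      exact mul_le_mul_of_nonneg_right hk hθ
  have heval : ∏ v, (p * g v true + (1 - p) * g v false)
      = p * exp θ * (1 - p + p * exp θ) ^ (#J - 1) := by
    rw [← prod_subset (subset_univ J) fun v _ hv => by simp [g, hv, ne_of_mem_of_not_mem ha hv |>.symm],
      ← mul_prod_erase J _ ha, prod_congr rfl (g := fun _ => 1 - p + p * exp θ) fun v hv => by
        simp [g, (mem_erase.mp hv).1, (mem_erase.mp hv).2]; ring,
      prod_const, card_erase_of_mem ha]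
    simp [g, ha]
  rw [heval] at hmarkov
  calc _ = exp (-(θ * k)) * (exp (θ * k) * percProb p _) := by
        rw [← mul_assoc, ← exp_add, neg_add_cancel, exp_zero, one_mul]
    _ ≤ _ := mul_le_mul_of_nonneg_left hmarkov (exp_pos _).le

end Bernoulli

lemma add_sq_div_two_le_neg_log_one_sub {x : ℝ} (hx0 : 0 ≤ x) (hx1 : x < 1) :
    x + x ^ 2 / 2 ≤ -log (1 - x) := by
  have hsum := hasSum_pow_div_log_of_abs_lt_one (abs_lt.mpr ⟨by linarith, hx1⟩)
  have h := sum_le_hasSum (range 2) (fun i _ => by positivity) hsum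
  norm_num [sum_range_succ] at h
  exact h

lemma percProb_mem_and_dense_le_exp {V : Type*} [Fintype V] [DecidableEq V] {ε d k : ℝ}
    (hε0 : 0 < ε) (hε1 : ε < 1) (hd : 1 ≤ d) (hk : 0 ≤ k) {J : Finset V} {a : V} (ha : a ∈ J)
    (hJ : (#J : ℝ) ≤ k * d + 1) :
    percProb ((1 - ε) / d) {ω | ω a = true ∧ k ≤ (#(J.filter (ω · = true)) : ℝ)}
      ≤ exp (-(ε ^ 2 / 2 * k)) / d := by
  set θ := -log (1 - ε)
  have hd0 : 0 < d := by linarith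
  have hε' : 0 < 1 - ε := by linarith
  have hθ : ε + ε ^ 2 / 2 ≤ θ := add_sq_div_two_le_neg_log_one_sub hε0.le hε1
  have hexpθ : exp θ = (1 - ε)⁻¹ := by rw [exp_neg, exp_log hε']
  have htilt : (1 - ε) / d * exp θ = 1 / d := by rw [hexpθ]; field_simp
  have hmean : 1 - (1 - ε) / d + (1 - ε) / d * exp θ = 1 + ε / d := by
    rw [htilt]; field_simp; ring
  have hJ' : ((#J - 1 : ℕ) : ℝ) ≤ k * d := by
    rcases Nat.eq_zero_or_pos #J with h0 | hpos
    · simp [h0]; positivity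
    · rw [Nat.cast_sub hpos]; push_cast; linarith
  have hpow : (1 + ε / d) ^ (#J - 1) ≤ exp (ε * k) := by
    calc (1 + ε / d) ^ (#J - 1) ≤ exp (ε / d) ^ (#J - 1) := by
          gcongr; linarith [add_one_le_exp (ε / d)]
      _ = exp ((#J - 1 : ℕ) * (ε / d)) := (exp_nat_mul _ _).symm
      _ ≤ exp (ε * k) := by
          refine exp_le_exp.mpr ?_
          calc ((#J - 1 : ℕ) : ℝ) * (ε / d) ≤ k * d * (ε / d) := by gcongr
            _ = ε * k := by field_simp
  calc _ ≤ exp (-(θ * k)) * ((1 - ε) / d * exp θ * (1 - (1 - ε) / d + (1 - ε) / d * exp θ)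
        ^ (#J - 1)) :=
        percProb_mem_and_dense_le (by positivity) (by rw [div_le_one hd0]; linarith) (by nlinarith)
          ha k
    _ ≤ exp (-(θ * k)) * (1 / d * exp (ε * k)) := by rw [hmean, htilt]; gcongr
    _ = exp (ε * k - θ * k) / d := by rw [sub_eq_add_neg, exp_add]; ring
    _ ≤ _ := by gcongr; nlinarith

section FinIndices

variable {n : ℕ}

lemma card_filter_dite_eq (ω : Fin n → Bool) (I : Finset ℕ) :
    #(I.filter fun i => (if h : i < n then ω ⟨i, h⟩ else false) = true)
      = #((univ.filter fun v : Fin n => (v : ℕ) ∈ I).filter (ω · = true)) := by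
  rw [← card_map Fin.valEmbedding]
  congr 1
  ext i
  by_cases hi : i < n
  · simp only [hi, dite_true, mem_filter, mem_univ, true_and, mem_map, Fin.valEmbedding_apply]
    exact ⟨fun h => ⟨⟨i, hi⟩, h, rfl⟩, by rintro ⟨v, hv, rfl⟩; exact hv⟩
  · simpa [hi] using fun (v : Fin n) _ _ (hv : (v : ℕ) = i) => hi (hv ▸ v.isLt)

lemma card_filter_val_mem_le (I : Finset ℕ) : #(univ.filter fun v : Fin n => (v : ℕ) ∈ I) ≤ #I :=
  card_le_card_of_injOn Fin.val (fun _ hv => (mem_filter.mp hv).2) Fin.val_injective.injOn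

lemma setOf_exists_dense_interval_subset (K : ℕ) (k : ℝ) :
    {ω : Fin n → Bool | ∃ a : ℕ, a + K ≤ n ∧
        (if h : a < n then ω ⟨a, h⟩ else false) = true ∧
        k ≤ (#((Ico a (a + K)).filter
          fun i => (if h : i < n then ω ⟨i, h⟩ else false) = true) : ℝ)}
      ⊆ ⋃ a ∈ (univ : Finset (Fin n)), {ω | ω a = true ∧
        k ≤ (#((univ.filter fun v : Fin n => (v : ℕ) ∈ Ico (a : ℕ) (a + K)).filter
          (ω · = true)) : ℝ)} := by
  rintro ω ⟨a, -, hωa, hdense⟩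
  split_ifs at hωa with han
  rw [card_filter_dite_eq] at hdense
  exact Set.mem_iUnion₂.mpr ⟨⟨a, han⟩, mem_univ _, hωa, hdense⟩

lemma percProb_start_and_dense_le_exp {ε d k : ℝ} (hε0 : 0 < ε) (hε1 : ε < 1) (hd : 1 ≤ d)
    (hk : 0 ≤ k) {K : ℕ} (hK : 0 < K) (hKk : (K : ℝ) ≤ k * d + 1) (a : Fin n) :
    percProb ((1 - ε) / d) {ω | ω a = true ∧
        k ≤ (#((univ.filter fun v : Fin n => (v : ℕ) ∈ Ico (a : ℕ) (a + K)).filter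
          (ω · = true)) : ℝ)}
      ≤ exp (-(ε ^ 2 / 2 * k)) / d := by
  refine percProb_mem_and_dense_le_exp hε0 hε1 hd hk
    (mem_filter.mpr ⟨mem_univ _, mem_Ico.mpr ⟨le_rfl, by omega⟩⟩) ?_
  calc _ ≤ (#(Ico (a : ℕ) (a + K)) : ℝ) := by exact_mod_cast card_filter_val_mem_le _
    _ = K := by rw [Nat.card_Ico, add_tsub_cancel_left]
    _ ≤ k * d + 1 := hKk

end FinIndices

theorem no_dense_interval :
    ∃ ε₀ : ℝ, 0 < ε₀ ∧ ∀ ε : ℝ, 0 < ε → ε < ε₀ → ∀ η : ℝ, 0 < η →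
    ∃ C : ℝ, 0 < C ∧ ∀ n d : ℕ, 3 ≤ d → C ≤ (n : ℝ) / d →
    1 - η ≤ percProb ((1 - ε) / d)
      {ω : Fin n → Bool | ¬ ∃ a : ℕ,
        a + ⌈4 / ε ^ 2 * Real.log ((n : ℝ) / d) * d⌉₊ ≤ n ∧
        (if h : a < n then ω ⟨a, h⟩ else false) = true ∧
        4 / ε ^ 2 * Real.log ((n : ℝ) / d) ≤
          (((Finset.Ico a (a + ⌈4 / ε ^ 2 * Real.log ((n : ℝ) / d) * d⌉₊)).filter
            (fun i => (if h : i < n then ω ⟨i, h⟩ else false) = true)).card : ℝ)} := by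
  refine ⟨1, one_pos, fun ε hε0 hε1 η hη => ⟨max 2 η⁻¹, by positivity, fun n d hd hC => ?_⟩⟩
  set L := log ((n : ℝ) / d)
  set k := 4 / ε ^ 2 * L
  have hd1 : (1 : ℝ) ≤ d := by exact_mod_cast (by omega : 1 ≤ d)
  have hnd : 1 < (n : ℝ) / d := by linarith [le_max_left 2 η⁻¹]
  have hk : 0 < k := mul_pos (by positivity) (log_pos hnd)
  have hp0 : 0 ≤ (1 - ε) / d := div_nonneg (by linarith) (by linarith)
  have hp1 : (1 - ε) / d ≤ 1 := by rw [div_le_one (by linarith)]; linarith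
  have hexp : exp (-(ε ^ 2 / 2 * k)) = (((n : ℝ) / d) ^ 2)⁻¹ := by
    rw [show ε ^ 2 / 2 * k = L + L by simp only [k]; field_simp; ring, exp_neg, exp_add,
      exp_log (by linarith), sq]
  rw [← Set.compl_ofPred, percProb_compl, sub_le_sub_iff_left]
  calc _ ≤ _ := percProb_le_sum_of_subset_biUnion hp0 hp1 (setOf_exists_dense_interval_subset _ k)
    _ ≤ ∑ _a : Fin n, exp (-(ε ^ 2 / 2 * k)) / d :=
        sum_le_sum fun a _ => percProb_start_and_dense_le_exp hε0 hε1 hd1 hk.le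
          (Nat.ceil_pos.mpr (by positivity)) (Nat.ceil_lt_add_one (by positivity)).le a
    _ = ((n : ℝ) / d)⁻¹ := by
        rw [sum_const, card_univ, Fintype.card_fin, nsmul_eq_mul, hexp]
        have hn0 : (n : ℝ) ≠ 0 := by rintro h; simp [h] at hnd; linarith
        field_simp
    _ ≤ η := inv_le_of_inv_le₀ hη (le_max_right _ _ |>.trans hC)
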